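/- arXiv:1810.08276 — 6 statements merged into one kernel-verified Lean document; each statement's English description precedes it below -/
import Mathlib

section
/- Let C be a minimum vertex cover of a finite simple graph G. Then for every minimal vertex cover C' of G, setting A = C ∩ C' and B = C \ C', we have C' = A ∪ (N(B) \ B), where N(B) is the set of vertices adjacent to some vertex of B. -/
variable {V : Type*}

/-- `C` is a vertex cover of `G`: every edge has an endpoint in `C`. -/
def IsVertexCover (G : SimpleGraph V) (C : Set V) : Prop :=
  ∀ ⦃u v : V⦄, G.Adj u v → u ∈ C ∨ v ∈ C

/-- A minimal vertex cover: no proper subset is a vertex cover. -/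
def IsMinimalVertexCover (G : SimpleGraph V) (C : Set V) : Prop :=
  IsVertexCover G C ∧ ∀ D : Set V, D ⊂ C → ¬ IsVertexCover G D

/-- `vc(G)`: minimum size of a vertex cover. -/
noncomputable def vcNum (G : SimpleGraph V) : ℕ :=
  sInf {n | ∃ C : Set V, IsVertexCover G C ∧ C.ncard = n}

/-- `vc⁺(G)`: maximum size of a minimal vertex cover. -/
noncomputable def vcPlus (G : SimpleGraph V) : ℕ :=
  sSup {n | ∃ C : Set V, IsMinimalVertexCover G C ∧ C.ncard = n}

/-- `I` is an independent set of `G`. -/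
def IsIndepSet (G : SimpleGraph V) (I : Set V) : Prop :=
  ∀ ⦃u v : V⦄, u ∈ I → v ∈ I → ¬ G.Adj u v

/-- A maximal independent set of `G`. -/
def IsMaxIndepSet (G : SimpleGraph V) (I : Set V) : Prop :=
  IsIndepSet G I ∧ ∀ J : Set V, IsIndepSet G J → I ⊆ J → J = I

/-- `G` is well covered: all maximal independent sets have the same size. -/
def WellCovered (G : SimpleGraph V) : Prop :=
  ∀ I J : Set V, IsMaxIndepSet G I → IsMaxIndepSet G J → I.ncard = J.ncard

/-- An independent set of the subgraph of `G` induced on `W`. -/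
def IsIndepOn (G : SimpleGraph V) (W I : Set V) : Prop :=
  I ⊆ W ∧ IsIndepSet G I

/-- A maximal independent set of the subgraph of `G` induced on `W`. -/
def IsMaxIndepOn (G : SimpleGraph V) (W I : Set V) : Prop :=
  IsIndepOn G W I ∧ ∀ J : Set V, IsIndepOn G W J → I ⊆ J → J = I

/-- The subgraph of `G` induced on `W` is well covered. -/
def WellCoveredOn (G : SimpleGraph V) (W : Set V) : Prop :=
  ∀ I J : Set V, IsMaxIndepOn G W I → IsMaxIndepOn G W J → I.ncard = J.ncard

/-- Independence number of the subgraph induced on `W`. -/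
noncomputable def indepNumOn (G : SimpleGraph V) (W : Set V) : ℕ :=
  sSup {n | ∃ I : Set V, IsIndepOn G W I ∧ I.ncard = n}

/-- Independence number `α(G)`. -/
noncomputable def indepNum (G : SimpleGraph V) : ℕ :=
  sSup {n | ∃ I : Set V, IsIndepSet G I ∧ I.ncard = n}

/-- Open neighborhood of a set `B`. -/
def nbhdSet (G : SimpleGraph V) (B : Set V) : Set V :=
  {v | ∃ b ∈ B, G.Adj b v}

/-- Crown decomposition of the subgraph of `G` induced on `W` into crown `C`,
head `H` and remainder `R`. -/
def IsCrownDecompOn (G : SimpleGraph V) (W C H R : Set V) : Prop :=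
  C.Nonempty ∧ IsIndepSet G C ∧
  (∀ ⦃u v : V⦄, u ∈ C → v ∈ R → ¬ G.Adj u v) ∧
  C ∪ H ∪ R = W ∧ Disjoint C H ∧ Disjoint C R ∧ Disjoint H R ∧
  ∃ M : V → V, (∀ h ∈ H, M h ∈ C ∧ G.Adj h (M h)) ∧ Set.InjOn M H

/-- Crown decomposition of `G`. -/
def IsCrownDecomp (G : SimpleGraph V) (C H R : Set V) : Prop :=
  IsCrownDecompOn G Set.univ C H R

/-- `G` has no isolated vertices. -/
def NoIsolated (G : SimpleGraph V) : Prop := ∀ v : V, ∃ u, G.Adj v u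

/-- Pseudo-split graph with partition `(R, C, S)`. -/
def IsPseudoSplit (G : SimpleGraph V) (R C S : Set V) : Prop :=
  R ∪ C ∪ S = Set.univ ∧ Disjoint R C ∧ Disjoint R S ∧ Disjoint C S ∧
  (∀ ⦃u v : V⦄, u ∈ C → v ∈ C → u ≠ v → G.Adj u v) ∧
  IsIndepSet G S ∧
  (∀ r ∈ R, ∀ c ∈ C, G.Adj r c) ∧
  (∀ r ∈ R, ∀ s ∈ S, ¬ G.Adj r s) ∧
  (∀ c ∈ C, ∃ s ∈ S, G.Adj c s) ∧
  (∀ s ∈ S, ∃ c ∈ C, ¬ G.Adj s c)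

/-- Join of two graphs: disjoint union plus all edges between the two sides. -/
def joinGraph {α β : Type*} (G₁ : SimpleGraph α) (G₂ : SimpleGraph β) :
    SimpleGraph (α ⊕ β) where
  Adj x y := match x, y with
    | Sum.inl a, Sum.inl b => G₁.Adj a b
    | Sum.inr a, Sum.inr b => G₂.Adj a b
    | Sum.inl _, Sum.inr _ => True
    | Sum.inr _, Sum.inl _ => True
  symm := ⟨by rintro (a|a) (b|b) h <;> first | exact h.symm | trivial⟩
  loopless := ⟨by rintro (a|a) h <;> exact h.ne rfl⟩

section

variable {G : SimpleGraph V}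

theorem IsVertexCover.nbhdSet_compl_subset {C : Set V} (hC : IsVertexCover G C) :
    nbhdSet G Cᶜ ⊆ C := by
  rintro v ⟨b, hb, hbv⟩
  exact (hC hbv).resolve_left hb

theorem nbhdSet_mono {B B' : Set V} (h : B ⊆ B') : nbhdSet G B ⊆ nbhdSet G B' := by
  rintro v ⟨b, hb, hbv⟩
  exact ⟨b, h hb, hbv⟩

theorem IsMinimalVertexCover.exists_adj_notMem {C : Set V} (hC : IsMinimalVertexCover G C)
    {x : V} (hx : x ∈ C) : ∃ y ∉ C, G.Adj y x := by
  have hnot : ¬ IsVertexCover G (C \ {x}) :=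
    hC.2 _ (Set.sdiff_singleton_ssubset.mpr hx)
  simp only [IsVertexCover, not_forall, not_or] at hnot
  obtain ⟨u, v, huv, hu, hv⟩ := hnot
  have mem_of_ne : ∀ w ∈ C, w ∉ C \ {x} → w = x := fun w hw hw' =>
    by_contra fun hne => hw' ⟨hw, hne⟩
  rcases hC.1 huv with huC | hvC
  · obtain rfl := mem_of_ne u huC hu
    exact ⟨v, fun hvC => hv ⟨hvC, huv.ne.symm⟩, huv.symm⟩
  · obtain rfl := mem_of_ne v hvC hv
    exact ⟨u, fun huC => hu ⟨huC, huv.ne⟩, huv⟩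

theorem IsMinimalVertexCover.mem_nbhdSet_diff {C C' : Set V} (hC : IsVertexCover G C)
    (hC' : IsMinimalVertexCover G C') {x : V} (hx : x ∈ C') (hxC : x ∉ C) :
    x ∈ nbhdSet G (C \ C') := by
  obtain ⟨y, hyC', hyx⟩ := hC'.exists_adj_notMem hx
  exact ⟨y, ⟨(hC hyx).resolve_right hxC, hyC'⟩, hyx⟩

end

theorem stmt3_general (G : SimpleGraph V) (C : Set V)
    (hC : IsVertexCover G C)
    (C' : Set V) (hC' : IsMinimalVertexCover G C') :
    C' = (C ∩ C') ∪ (nbhdSet G (C \ C') \ (C \ C')) := by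
  refine Set.Subset.antisymm (fun x hx => ?_) ?_
  · by_cases hxC : x ∈ C
    · exact Or.inl ⟨hxC, hx⟩
    · exact Or.inr ⟨hC'.mem_nbhdSet_diff hC hx hxC, fun h => hxC h.1⟩
  · have hN : nbhdSet G (C \ C') ⊆ C' :=
      (nbhdSet_mono (Set.sdiff_subset_compl C C')).trans hC'.1.nbhdSet_compl_subset
    exact Set.union_subset Set.inter_subset_right (Set.sdiff_subset.trans hN)

theorem stmt3 [Fintype V] (G : SimpleGraph V) (C : Set V)
    (hC : IsVertexCover G C) (hmin : C.ncard = vcNum G)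
    (C' : Set V) (hC' : IsMinimalVertexCover G C') :
    C' = (C ∩ C') ∪ (nbhdSet G (C \ C') \ (C \ C')) :=
  stmt3_general G C hC C' hC'
end

section
/- Let C be a minimum vertex cover of a finite simple graph G, and let (A, B) be a partition of C such that B is an independent set. Then A ∪ (N(B) \ B) is a vertex cover of G. -/
variable {V : Type*}

section

variable {G : SimpleGraph V} {A B : Set V} {u v : V}

theorem IsIndepSet.mem_nbhdSet_diff_of_adj (hB : IsIndepSet G B) (hu : u ∈ B)
    (huv : G.Adj u v) : v ∈ nbhdSet G B \ B :=
  ⟨⟨u, hu, huv⟩, fun hv => hB hu hv huv⟩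

theorem IsVertexCover.union_nbhdSet_diff (hC : IsVertexCover G (A ∪ B))
    (hB : IsIndepSet G B) : IsVertexCover G (A ∪ (nbhdSet G B \ B)) := by
  intro u v huv
  rcases hC huv with (hu | hu) | (hv | hv)
  · exact Or.inl (Or.inl hu)
  · exact Or.inr (Or.inr (hB.mem_nbhdSet_diff_of_adj hu huv))
  · exact Or.inr (Or.inl hv)
  · exact Or.inl (Or.inr (hB.mem_nbhdSet_diff_of_adj hv huv.symm))

end

theorem stmt4_general (G : SimpleGraph V) (C A B : Set V)
    (hC : IsVertexCover G C)
    (hunion : A ∪ B = C) (hB : IsIndepSet G B) :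
    IsVertexCover G (A ∪ (nbhdSet G B \ B)) := by
  subst hunion
  exact hC.union_nbhdSet_diff hB

theorem stmt4 [Fintype V] (G : SimpleGraph V) (C A B : Set V)
    (hC : IsVertexCover G C) (hmin : C.ncard = vcNum G)
    (hunion : A ∪ B = C) (hdisj : Disjoint A B) (hB : IsIndepSet G B) :
    IsVertexCover G (A ∪ (nbhdSet G B \ B)) :=
  stmt4_general G C A B hC hunion hB
end

section
/- In any crown decomposition (C, H, R) of a finite simple graph G, there exists a minimum vertex cover of G containing H; consequently |H| ≤ vc(G). -/
variable {V : Type*}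

/-! Take a minimum vertex cover `K` and replace its part inside the crown by the head:
`K \ C ∪ H`. It is still a cover, since every edge at `C` ends in `H`. It is no larger,
since the matching sends the head vertices missing from `K` injectively into `K ∩ C`
(each matched edge must be covered at its crown end). -/

section CrownCover

variable {G : SimpleGraph V}

theorem vcNum_le_ncard {K : Set V} (hK : IsVertexCover G K) : vcNum G ≤ K.ncard :=
  Nat.sInf_le ⟨K, hK, rfl⟩

theorem exists_isVertexCover_ncard_eq_vcNum [Finite V] (G : SimpleGraph V) :
    ∃ K : Set V, IsVertexCover G K ∧ K.ncard = vcNum G :=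
  Nat.sInf_mem (s := {n | ∃ K : Set V, IsVertexCover G K ∧ K.ncard = n})
    ⟨_, Set.univ, fun _ _ _ => Or.inl trivial, rfl⟩

theorem IsCrownDecomp.nbhdSet_subset {C H R : Set V} (hcd : IsCrownDecomp G C H R) :
    nbhdSet G C ⊆ H := by
  obtain ⟨-, hCindep, hCR, hpart, -⟩ := hcd
  rintro v ⟨c, hc, hcv⟩
  have hv : v ∈ C ∪ H ∪ R := hpart ▸ Set.mem_univ v
  rcases hv with (hvC | hvH) | hvR
  · exact absurd hcv (hCindep hc hvC)
  · exact hvH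
  · exact absurd hcv (hCR hc hvR)

theorem IsVertexCover.diff_union_of_nbhdSet_subset {K C H : Set V} (hK : IsVertexCover G K)
    (hCH : nbhdSet G C ⊆ H) : IsVertexCover G (K \ C ∪ H) := by
  intro u v huv
  by_cases hu : u ∈ C
  · exact Or.inr (Or.inr (hCH ⟨u, hu, huv⟩))
  by_cases hv : v ∈ C
  · exact Or.inl (Or.inr (hCH ⟨v, hv, huv.symm⟩))
  rcases hK huv with huK | hvK
  · exact Or.inl (Or.inl ⟨huK, hu⟩)
  · exact Or.inr (Or.inl ⟨hvK, hv⟩)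

theorem IsVertexCover.ncard_diff_union_le [Finite V] {K C H : Set V} (hK : IsVertexCover G K)
    (hCH : Disjoint C H) {M : V → V} (hM : ∀ h ∈ H, M h ∈ C ∧ G.Adj h (M h))
    (hMinj : Set.InjOn M H) : (K \ C ∪ H).ncard ≤ K.ncard := by
  have hsub : K \ C ∪ H ⊆ K \ C ∪ H \ K := by
    rintro x (hx | hxH)
    · exact Or.inl hx
    by_cases hxK : x ∈ K
    · exact Or.inl ⟨hxK, Set.disjoint_right.mp hCH hxH⟩
    · exact Or.inr ⟨hxH, hxK⟩
  have hmatch : (H \ K).ncard ≤ (K ∩ C).ncard := by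
    refine Set.ncard_le_ncard_of_injOn M (fun h ⟨hH, hnK⟩ => ?_) (hMinj.mono Set.sdiff_subset)
    obtain ⟨hMC, hadj⟩ := hM h hH
    exact ⟨(hK hadj).resolve_left hnK, hMC⟩
  calc (K \ C ∪ H).ncard
      ≤ (K \ C ∪ H \ K).ncard := Set.ncard_le_ncard hsub
    _ ≤ (K \ C).ncard + (H \ K).ncard := Set.ncard_union_le _ _
    _ ≤ (K ∩ C).ncard + (K \ C).ncard := by omega
    _ = K.ncard := Set.ncard_inter_add_ncard_sdiff_eq_ncard K C

end CrownCover

theorem stmt5 [Fintype V] (G : SimpleGraph V) (C H R : Set V)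
    (hcd : IsCrownDecomp G C H R) :
    (∃ K : Set V, IsVertexCover G K ∧ K.ncard = vcNum G ∧ H ⊆ K) ∧
    H.ncard ≤ vcNum G := by
  obtain ⟨K, hK, hKcard⟩ := exists_isVertexCover_ncard_eq_vcNum G
  have hK' : IsVertexCover G (K \ C ∪ H) := hK.diff_union_of_nbhdSet_subset hcd.nbhdSet_subset
  obtain ⟨-, -, -, -, hCH, -, -, M, hM, hMinj⟩ := hcd
  have hK'card : (K \ C ∪ H).ncard = vcNum G :=
    le_antisymm (hKcard ▸ hK.ncard_diff_union_le hCH hM hMinj) (vcNum_le_ncard hK')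
  exact ⟨⟨_, hK', hK'card, Set.subset_union_right⟩,
    hK'card ▸ Set.ncard_le_ncard Set.subset_union_right⟩
end

section
/- If (C, H, R) is a crown decomposition of a graph G and (C', H', R') is a crown decomposition of the induced subgraph G[R], then (C ∪ C', H ∪ H', R') is a crown decomposition of G. -/
variable {V : Type*}

def IsMatchingInto (G : SimpleGraph V) (M : V → V) (H C : Set V) : Prop :=
  (∀ h ∈ H, M h ∈ C ∧ G.Adj h (M h)) ∧ Set.InjOn M H

theorem IsMatchingInto.piecewise {G : SimpleGraph V} {M M' : V → V} {H H' C C' : Set V}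
    [DecidablePred (· ∈ H)] (hM : IsMatchingInto G M H C) (hM' : IsMatchingInto G M' H' C')
    (hH : Disjoint H H') (hC : Disjoint C C') :
    IsMatchingInto G (H.piecewise M M') (H ∪ H') (C ∪ C') := by
  have hEqOn : Set.EqOn (H.piecewise M M') M H := Set.piecewise_eqOn H M M'
  have hEqOn' : Set.EqOn (H.piecewise M M') M' H' :=
    (Set.piecewise_eqOn_compl H M M').mono (Set.subset_compl_iff_disjoint_left.2 hH)
  refine ⟨?_, (Set.injOn_union hH).2 ⟨hM.2.congr hEqOn.symm, hM'.2.congr hEqOn'.symm, ?_⟩⟩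
  · rintro v (hv | hv)
    · rw [hEqOn hv]
      exact ⟨.inl (hM.1 v hv).1, (hM.1 v hv).2⟩
    · rw [hEqOn' hv]
      exact ⟨.inr (hM'.1 v hv).1, (hM'.1 v hv).2⟩
  · intro u hu v hv
    rw [hEqOn hu, hEqOn' hv]
    exact hC.ne_of_mem (hM.1 u hu).1 (hM'.1 v hv).1

theorem IsIndepSet.union {G : SimpleGraph V} {C C' : Set V} (hC : IsIndepSet G C)
    (hC' : IsIndepSet G C') (hCC' : ∀ ⦃u v : V⦄, u ∈ C → v ∈ C' → ¬ G.Adj u v) :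
    IsIndepSet G (C ∪ C') := by
  rintro u v (hu | hu) (hv | hv)
  · exact hC hu hv
  · exact hCC' hu hv
  · exact fun huv => hCC' hv hu huv.symm
  · exact hC' hu hv

namespace IsCrownDecompOn

variable {G : SimpleGraph V} {W C H R C' H' R' : Set V}

theorem union_eq (h : IsCrownDecompOn G W C H R) : C ∪ H ∪ R = W := h.2.2.2.1

theorem of_remainder (h : IsCrownDecompOn G W C H R) (h' : IsCrownDecompOn G R C' H' R') :
    IsCrownDecompOn G W (C ∪ C') (H ∪ H') R' := by
  have hC'R : C' ⊆ R := h'.union_eq ▸ Set.subset_union_left.trans Set.subset_union_left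
  have hH'R : H' ⊆ R := h'.union_eq ▸ Set.subset_union_right.trans Set.subset_union_left
  have hR'R : R' ⊆ R := h'.union_eq ▸ Set.subset_union_right
  have hW : C ∪ C' ∪ (H ∪ H') ∪ R' = W := by
    rw [← h.union_eq, ← h'.union_eq]
    ext x
    simp only [Set.mem_union]
    tauto
  obtain ⟨hCne, hCind, hCR, -, hCH, hCRd, hHR, M, hM⟩ := h
  obtain ⟨-, hC'ind, hC'R', -, hC'H', hC'R'd, hH'R', M', hM'⟩ := h'
  classical
  refine ⟨hCne.mono Set.subset_union_left,
    hCind.union hC'ind fun u v hu hv => hCR hu (hC'R hv), ?_, hW, ?_, ?_, ?_,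
    ⟨_, IsMatchingInto.piecewise hM hM' (hHR.mono_right hH'R) (hCRd.mono_right hC'R)⟩⟩
  · rintro u v (hu | hu) hv
    · exact hCR hu (hR'R hv)
    · exact hC'R' hu hv
  · rw [Set.disjoint_union_left, Set.disjoint_union_right, Set.disjoint_union_right]
    exact ⟨⟨hCH, hCRd.mono_right hH'R⟩, ⟨(hHR.mono_right hC'R).symm, hC'H'⟩⟩
  · exact Set.disjoint_union_left.2 ⟨hCRd.mono_right hR'R, hC'R'd⟩
  · exact Set.disjoint_union_left.2 ⟨hHR.mono_right hR'R, hH'R'⟩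

end IsCrownDecompOn

theorem stmt10 (G : SimpleGraph V) (C H R C' H' R' : Set V)
    (h1 : IsCrownDecomp G C H R) (h2 : IsCrownDecompOn G R C' H' R') :
    IsCrownDecomp G (C ∪ C') (H ∪ H') R' :=
  h1.of_remainder h2
end

section
/- A thick spider G with partition (R, C, S), where C = {c₁,...,c_k}, S = {s₁,...,s_k} (k ≥ 2) and s_i is adjacent to c_j iff i ≠ j, is well covered if and only if R = ∅ and k = 2. -/
/-!
The vertex `c i` is adjacent to everything except `s i`, so `{c i, s i}` is a maximal
independent set of size 2, while `S` (of size `k`) and `S ∪ {r}` for any `r ∈ R` are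
independent. Hence well-coveredness forces `k ≤ 2` and `R = ∅`. Conversely, when `R = ∅` a
maximal independent set either contains some `c i`, and then is `{c i, s i}`, or lies in `S`,
and then is `S`.
-/

variable {V : Type*}

lemma IsIndepSet.exists_isMaxIndepSet_superset {G : SimpleGraph V} {I : Set V}
    (hI : IsIndepSet G I) : ∃ J, I ⊆ J ∧ IsMaxIndepSet G J := by
  have hchain :
      ∀ c ⊆ {J | IsIndepSet G J}, IsChain (· ⊆ ·) c → IsIndepSet G (⋃₀ c) := by
    rintro c hc hchain u v ⟨A, hA, huA⟩ ⟨B, hB, hvB⟩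
    obtain h | h := hchain.total hA hB
    · exact hc hB (h huA) hvB
    · exact hc hA huA (h hvB)
  obtain ⟨J, hIJ, hJ⟩ := zorn_subset_nonempty {J | IsIndepSet G J}
    (fun c hc hc' _ => ⟨⋃₀ c, hchain c hc hc', fun _ => Set.subset_sUnion_of_mem⟩) I hI
  exact ⟨J, hIJ, hJ.prop, fun K hK hJK => (hJ.eq_of_subset hK hJK).symm⟩

lemma IsIndepSet.isMaxIndepSet_of_forall_exists_adj {G : SimpleGraph V} {I : Set V}
    (hI : IsIndepSet G I) (hdom : ∀ v ∉ I, ∃ u ∈ I, G.Adj v u) : IsMaxIndepSet G I := by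
  refine ⟨hI, fun J hJ hIJ => Set.Subset.antisymm (fun v hv => ?_) hIJ⟩
  by_contra hvI
  obtain ⟨u, hu, hvu⟩ := hdom v hvI
  exact hJ hv (hIJ hu) hvu

lemma WellCovered.ncard_le_of_isIndepSet {G : SimpleGraph V} (hG : WellCovered G)
    {M T : Set V} (hM : IsMaxIndepSet G M) (hM₀ : M.ncard ≠ 0) (hT : IsIndepSet G T) :
    T.ncard ≤ M.ncard := by
  obtain ⟨J, hTJ, hJ⟩ := hT.exists_isMaxIndepSet_superset
  have hJM := hG J M hJ hM
  exact hJM ▸ Set.ncard_le_ncard hTJ (Set.finite_of_ncard_ne_zero (hJM ▸ hM₀))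

def IsThickSpider (G : SimpleGraph V) (R : Set V) {k : ℕ} (cf sf : Fin k → V) : Prop :=
  IsPseudoSplit G R (Set.range cf) (Set.range sf) ∧ ∀ i j, G.Adj (sf i) (cf j) ↔ i ≠ j

namespace IsThickSpider

variable {G : SimpleGraph V} {R : Set V} {k : ℕ} {cf sf : Fin k → V}

lemma sf_injective (hG : IsThickSpider G R cf sf) : Function.Injective sf := by
  intro i j hij
  by_contra hne
  exact (hG.2 j j).1 (hij ▸ (hG.2 i j).2 hne) rfl

lemma cf_ne_sf (hG : IsThickSpider G R cf sf) (i j : Fin k) : cf i ≠ sf j := by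
  obtain ⟨⟨-, -, -, hCS, -⟩, -⟩ := hG
  exact fun h => Set.disjoint_left.mp hCS ⟨i, rfl⟩ (h ▸ ⟨j, rfl⟩)

lemma notMem_range_sf (hG : IsThickSpider G R cf sf) {r : V} (hr : r ∈ R) :
    r ∉ Set.range sf := by
  obtain ⟨⟨-, -, hRS, -⟩, -⟩ := hG
  exact Set.disjoint_left.mp hRS hr

lemma adj_cf_of_ne (hG : IsThickSpider G R cf sf) {v : V} {i : Fin k} (hc : v ≠ cf i)
    (hs : v ≠ sf i) : G.Adj v (cf i) := by
  obtain ⟨⟨hcover, -, -, -, hclique, -, hRC, -⟩, hadj⟩ := hG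
  have hv : v ∈ R ∪ Set.range cf ∪ Set.range sf := hcover ▸ Set.mem_univ v
  rcases hv with (hvR | ⟨j, rfl⟩) | ⟨j, rfl⟩
  · exact hRC v hvR _ ⟨i, rfl⟩
  · exact hclique ⟨j, rfl⟩ ⟨i, rfl⟩ hc
  · exact (hadj j i).2 fun h => hs (h ▸ rfl)

lemma isIndepSet_range_sf (hG : IsThickSpider G R cf sf) : IsIndepSet G (Set.range sf) := by
  obtain ⟨⟨-, -, -, -, -, hS, -⟩, -⟩ := hG
  exact hS

lemma isIndepSet_insert_range_sf (hG : IsThickSpider G R cf sf) {r : V} (hr : r ∈ R) :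
    IsIndepSet G (insert r (Set.range sf)) := by
  obtain ⟨⟨-, -, -, -, -, hS, -, hRS, -⟩, -⟩ := hG
  rintro u v (rfl | hu) (rfl | hv) huv
  · exact huv.ne rfl
  · exact hRS u hr v hv huv
  · exact hRS v hr u hu huv.symm
  · exact hS hu hv huv

lemma isIndepSet_pair (hG : IsThickSpider G R cf sf) (i : Fin k) :
    IsIndepSet G {cf i, sf i} := by
  have hcs : ¬ G.Adj (cf i) (sf i) := fun h => (hG.2 i i).1 h.symm rfl
  rintro u v (rfl | rfl) (rfl | rfl) huv
  · exact huv.ne rfl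
  · exact hcs huv
  · exact hcs huv.symm
  · exact huv.ne rfl

lemma isMaxIndepSet_pair (hG : IsThickSpider G R cf sf) (i : Fin k) :
    IsMaxIndepSet G {cf i, sf i} :=
  (hG.isIndepSet_pair i).isMaxIndepSet_of_forall_exists_adj fun _ hv =>
    ⟨cf i, Or.inl rfl, hG.adj_cf_of_ne (fun h => hv (Or.inl h)) (fun h => hv (Or.inr h))⟩

lemma ncard_pair (hG : IsThickSpider G R cf sf) (i : Fin k) :
    ({cf i, sf i} : Set V).ncard = 2 :=
  Set.ncard_pair (hG.cf_ne_sf i i)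

lemma ncard_range_sf (hG : IsThickSpider G R cf sf) : (Set.range sf).ncard = k := by
  rw [Set.ncard_range_of_injective hG.sf_injective, Nat.card_eq_fintype_card, Fintype.card_fin]

lemma ncard_insert_range_sf (hG : IsThickSpider G R cf sf) {r : V} (hr : r ∈ R) :
    (insert r (Set.range sf)).ncard = k + 1 := by
  rw [Set.ncard_insert_of_notMem (hG.notMem_range_sf hr), hG.ncard_range_sf]

lemma eq_pair_or_eq_range_sf (hG : IsThickSpider G R cf sf) (hR : R = ∅) {I : Set V}
    (hI : IsMaxIndepSet G I) : (∃ i, I = {cf i, sf i}) ∨ I = Set.range sf := by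
  by_cases hC : ∃ i, cf i ∈ I
  · obtain ⟨i, hi⟩ := hC
    have hsub : I ⊆ {cf i, sf i} := fun v hv => by
      by_contra hne
      simp only [Set.mem_insert_iff, Set.mem_singleton_iff, not_or] at hne
      exact hI.1 hv hi (hG.adj_cf_of_ne hne.1 hne.2)
    exact Or.inl ⟨i, (hI.2 _ (hG.isIndepSet_pair i) hsub).symm⟩
  · push Not at hC
    have hsub : I ⊆ Set.range sf := fun v hv => by
      have hv' : v ∈ R ∪ Set.range cf ∪ Set.range sf := hG.1.1 ▸ Set.mem_univ v
      rcases hv' with (hvR | ⟨j, rfl⟩) | hvS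
      · exact absurd (hR ▸ hvR) (Set.notMem_empty v)
      · exact absurd hv (hC j)
      · exact hvS
    exact Or.inr (hI.2 _ hG.isIndepSet_range_sf hsub).symm

end IsThickSpider

theorem stmt17_general (G : SimpleGraph V) (R : Set V) (k : ℕ) (hk : 2 ≤ k)
    (cf sf : Fin k → V)
    (hps : IsPseudoSplit G R (Set.range cf) (Set.range sf))
    (hadj : ∀ i j, G.Adj (sf i) (cf j) ↔ i ≠ j) :
    WellCovered G ↔ (R = ∅ ∧ k = 2) := by
  have hG : IsThickSpider G R cf sf := ⟨hps, hadj⟩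
  obtain ⟨i₀⟩ : Nonempty (Fin k) := ⟨⟨0, by omega⟩⟩
  constructor
  · intro hwc
    have hle {T : Set V} (hT : IsIndepSet G T) : T.ncard ≤ 2 :=
      hG.ncard_pair i₀ ▸
        hwc.ncard_le_of_isIndepSet (hG.isMaxIndepSet_pair i₀) (by simp [hG.ncard_pair]) hT
    have hk2 : k = 2 := by
      have := hle hG.isIndepSet_range_sf
      rw [hG.ncard_range_sf] at this
      omega
    refine ⟨Set.eq_empty_of_forall_notMem fun r hr => ?_, hk2⟩
    have := hle (hG.isIndepSet_insert_range_sf hr)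
    rw [hG.ncard_insert_range_sf hr] at this
    omega
  · rintro ⟨hR, rfl⟩ I J hI hJ
    have hcard {I : Set V} (hI : IsMaxIndepSet G I) : I.ncard = 2 := by
      obtain ⟨i, rfl⟩ | rfl := hG.eq_pair_or_eq_range_sf hR hI
      · exact hG.ncard_pair i
      · exact hG.ncard_range_sf
    rw [hcard hI, hcard hJ]

theorem stmt17 [Fintype V] (G : SimpleGraph V) (R : Set V) (k : ℕ) (hk : 2 ≤ k)
    (cf sf : Fin k → V)
    (hcf : Function.Injective cf) (hsf : Function.Injective sf)
    (hps : IsPseudoSplit G R (Set.range cf) (Set.range sf))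
    (hadj : ∀ i j, G.Adj (sf i) (cf j) ↔ i ≠ j) :
    WellCovered G ↔ (R = ∅ ∧ k = 2) :=
  stmt17_general G R k hk cf sf hps hadj
end

section
/- Let G be a graph with an induced subgraph H whose vertex set is partitioned into H₁ and H₂, such that G − H is nonempty, every vertex of G − H is adjacent to every vertex of H₁ and non-adjacent to every vertex of H₂. Then G is well covered if and only if G − H and G[H₂] are well covered and every maximal independent set of H containing a vertex of H₁ has exactly α(G−H) + α(G[H₂]) vertices. -/
variable {V : Type*}

/-!
Write `R` for `V \ (H₁ ∪ H₂)`. Since `R ≠ ∅` is complete to `H₁` and anticomplete to `H₂`, a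
maximal independent set of `G` either meets `H₁`, and is then exactly a maximal independent set
of `H` meeting `H₁`, or misses `H₁`, and is then a maximal independent set of
`G[R ∪ H₂] = G[R] + G[H₂]`. Conversely both kinds are maximal in `G`: a set of the second kind
contains a vertex of `R`, which dominates `H₁`. A disjoint union is well covered iff both summands
are, and then all its maximal independent sets have size `α(G - H) + α(G[H₂])`.
-/

section

variable {G : SimpleGraph V} {A B W U I J K H₁ H₂ : Set V}

theorem IsIndepSet.mono (hJ : IsIndepSet G J) (hIJ : I ⊆ J) : IsIndepSet G I :=
  fun _ _ hu hv => hJ (hIJ hu) (hIJ hv)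

theorem isMaxIndepOn_iff :
    IsMaxIndepOn G W I ↔ IsIndepOn G W I ∧ ∀ v ∈ W, v ∉ I → ∃ u ∈ I, G.Adj u v := by
  refine ⟨fun h => ⟨h.1, fun v hvW hvI => ?_⟩, fun ⟨hI, hdom⟩ => ⟨hI, fun J hJ hIJ => ?_⟩⟩
  · by_contra! hv
    have hind : IsIndepOn G W (insert v I) := by
      refine ⟨Set.insert_subset hvW h.1.1, ?_⟩
      rintro a b (rfl | ha) (rfl | hb)
      · exact G.irrefl
      · exact fun hab => hv b hb hab.symm
      · exact hv a ha
      · exact h.1.2 ha hb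
    exact hvI (h.2 _ hind (Set.subset_insert v I) ▸ Set.mem_insert v I)
  · refine Set.Subset.antisymm (fun v hvJ => ?_) hIJ
    by_contra hvI
    obtain ⟨u, huI, huv⟩ := hdom v (hJ.1 hvJ) hvI
    exact hJ.2 (hIJ huI) hvJ huv

theorem isMaxIndepSet_iff_isMaxIndepOn_univ : IsMaxIndepSet G I ↔ IsMaxIndepOn G Set.univ I := by
  simp [IsMaxIndepSet, IsMaxIndepOn, IsIndepOn]

theorem IsMaxIndepOn.restrict (h : IsMaxIndepOn G W I) (hIU : I ⊆ U) (hUW : U ⊆ W) :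
    IsMaxIndepOn G U I :=
  isMaxIndepOn_iff.2 ⟨⟨hIU, h.1.2⟩, fun v hv => (isMaxIndepOn_iff.1 h).2 v (hUW hv)⟩

theorem IsMaxIndepOn.extend (h : IsMaxIndepOn G U I) (hUW : U ⊆ W)
    (hdom : ∀ v ∈ W, v ∉ U → ∃ u ∈ I, G.Adj u v) : IsMaxIndepOn G W I := by
  refine isMaxIndepOn_iff.2 ⟨⟨h.1.1.trans hUW, h.1.2⟩, fun v hvW hvI => ?_⟩
  by_cases hvU : v ∈ U
  · exact (isMaxIndepOn_iff.1 h).2 v hvU hvI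
  · exact hdom v hvW hvU

theorem IsMaxIndepOn.nonempty (h : IsMaxIndepOn G W I) (hW : W.Nonempty) : I.Nonempty := by
  obtain ⟨w, hw⟩ := hW
  by_contra hI
  obtain ⟨u, hu, -⟩ :=
    (isMaxIndepOn_iff.1 h).2 w hw (by simp [Set.not_nonempty_iff_eq_empty.1 hI])
  exact hI ⟨u, hu⟩

theorem IsIndepOn.exists_isMaxIndepOn_superset [Finite V] (hI : IsIndepOn G W I) :
    ∃ J, IsMaxIndepOn G W J ∧ I ⊆ J := by
  obtain ⟨J, ⟨hJ, hIJ⟩, hmax⟩ := Set.Finite.exists_maximalFor Set.ncard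
    {J | IsIndepOn G W J ∧ I ⊆ J} (Set.toFinite _) ⟨I, hI, subset_rfl⟩
  refine ⟨J, ⟨hJ, fun K hK hJK => ?_⟩, hIJ⟩
  have hle := Set.ncard_le_ncard hJK
  exact (Set.eq_of_subset_of_ncard_le hJK (hmax ⟨hK, hIJ.trans hJK⟩ hle)).symm

theorem exists_isMaxIndepOn [Finite V] (G : SimpleGraph V) (W : Set V) :
    ∃ I, IsMaxIndepOn G W I := by
  have hempty : IsIndepOn G W ∅ :=
    ⟨Set.empty_subset W, fun _ _ hu => absurd hu (Set.notMem_empty _)⟩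
  exact (IsIndepOn.exists_isMaxIndepOn_superset hempty).imp fun _ h => h.1

theorem WellCoveredOn.indepNumOn_eq [Finite V] (hW : WellCoveredOn G W)
    (hI : IsMaxIndepOn G W I) : indepNumOn G W = I.ncard := by
  refine IsGreatest.csSup_eq ⟨⟨I, hI.1, rfl⟩, ?_⟩
  rintro n ⟨J, hJ, rfl⟩
  obtain ⟨K, hK, hJK⟩ := IsIndepOn.exists_isMaxIndepOn_superset hJ
  exact (Set.ncard_le_ncard hJK).trans (hW K I hK hI).le

theorem IsMaxIndepOn.union (hAB : ∀ a ∈ A, ∀ b ∈ B, ¬ G.Adj a b)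
    (hJ : IsMaxIndepOn G A J) (hK : IsMaxIndepOn G B K) :
    IsMaxIndepOn G (A ∪ B) (J ∪ K) := by
  refine isMaxIndepOn_iff.2 ⟨⟨Set.union_subset_union hJ.1.1 hK.1.1, ?_⟩, ?_⟩
  · rintro u v (hu | hu) (hv | hv)
    · exact hJ.1.2 hu hv
    · exact hAB u (hJ.1.1 hu) v (hK.1.1 hv)
    · exact fun huv => hAB v (hJ.1.1 hv) u (hK.1.1 hu) huv.symm
    · exact hK.1.2 hu hv
  · rintro v (hv | hv) hvJK
    · obtain ⟨u, hu, huv⟩ := (isMaxIndepOn_iff.1 hJ).2 v hv (fun h => hvJK (Or.inl h))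
      exact ⟨u, Or.inl hu, huv⟩
    · obtain ⟨u, hu, huv⟩ := (isMaxIndepOn_iff.1 hK).2 v hv (fun h => hvJK (Or.inr h))
      exact ⟨u, Or.inr hu, huv⟩

theorem IsMaxIndepOn.inter_left (hAB : ∀ a ∈ A, ∀ b ∈ B, ¬ G.Adj a b)
    (h : IsMaxIndepOn G (A ∪ B) I) : IsMaxIndepOn G A (I ∩ A) := by
  refine isMaxIndepOn_iff.2
    ⟨⟨Set.inter_subset_right, IsIndepSet.mono h.1.2 Set.inter_subset_left⟩, ?_⟩
  intro v hvA hvIA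
  obtain ⟨u, huI, huv⟩ := (isMaxIndepOn_iff.1 h).2 v (Or.inl hvA) (fun hvI => hvIA ⟨hvI, hvA⟩)
  rcases h.1.1 huI with huA | huB
  · exact ⟨u, ⟨huI, huA⟩, huv⟩
  · exact absurd huv.symm (hAB v hvA u huB)

theorem IsMaxIndepOn.inter_right (hAB : ∀ a ∈ A, ∀ b ∈ B, ¬ G.Adj a b)
    (h : IsMaxIndepOn G (A ∪ B) I) : IsMaxIndepOn G B (I ∩ B) :=
  IsMaxIndepOn.inter_left (fun b hb a ha hba => hAB a ha b hb hba.symm) (Set.union_comm A B ▸ h)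

theorem ncard_eq_indepNumOn_add_of_isMaxIndepOn_union [Finite V] (hdisj : Disjoint A B)
    (hAB : ∀ a ∈ A, ∀ b ∈ B, ¬ G.Adj a b) (hA : WellCoveredOn G A) (hB : WellCoveredOn G B)
    (h : IsMaxIndepOn G (A ∪ B) I) : I.ncard = indepNumOn G A + indepNumOn G B := by
  have hsplit : I = I ∩ A ∪ I ∩ B := by
    rw [← Set.inter_union_distrib_left, Set.inter_eq_left.2 h.1.1]
  rw [hsplit, Set.ncard_union_eq (hdisj.mono Set.inter_subset_right Set.inter_subset_right),
    hA.indepNumOn_eq (h.inter_left hAB), hB.indepNumOn_eq (h.inter_right hAB)]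

theorem WellCoveredOn.of_union_left [Finite V] (hdisj : Disjoint A B)
    (hAB : ∀ a ∈ A, ∀ b ∈ B, ¬ G.Adj a b) (h : WellCoveredOn G (A ∪ B)) :
    WellCoveredOn G A := by
  intro I J hI hJ
  obtain ⟨K, hK⟩ := exists_isMaxIndepOn G B
  have hsize := h _ _ (hI.union hAB hK) (hJ.union hAB hK)
  rwa [Set.ncard_union_eq (hdisj.mono hI.1.1 hK.1.1),
    Set.ncard_union_eq (hdisj.mono hJ.1.1 hK.1.1), Nat.add_right_cancel_iff] at hsize

theorem WellCoveredOn.of_union_right [Finite V] (hdisj : Disjoint A B)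
    (hAB : ∀ a ∈ A, ∀ b ∈ B, ¬ G.Adj a b) (h : WellCoveredOn G (A ∪ B)) :
    WellCoveredOn G B :=
  WellCoveredOn.of_union_left hdisj.symm (fun b hb a ha hba => hAB a ha b hb hba.symm)
    (Set.union_comm A B ▸ h)

theorem isMaxIndepSet_of_isMaxIndepOn_compl_union_union
    (hne : ((H₁ ∪ H₂)ᶜ : Set V).Nonempty) (hadj1 : ∀ v ∈ (H₁ ∪ H₂)ᶜ, ∀ u ∈ H₁, G.Adj v u)
    (hadj2 : ∀ v ∈ (H₁ ∪ H₂)ᶜ, ∀ u ∈ H₂, ¬ G.Adj v u)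
    (hI : IsMaxIndepOn G ((H₁ ∪ H₂)ᶜ ∪ H₂) I) : IsMaxIndepSet G I := by
  obtain ⟨r, hrI, hrR⟩ := (hI.inter_left hadj2).nonempty hne
  refine isMaxIndepSet_iff_isMaxIndepOn_univ.2 (hI.extend (Set.subset_univ _) fun v _ hv => ?_)
  have hvH₁ : v ∈ H₁ := by
    simp only [Set.mem_union, Set.mem_compl_iff] at hv
    tauto
  exact ⟨r, hrI, hadj1 r hrR v hvH₁⟩

theorem isMaxIndepSet_of_isMaxIndepOn_union
    (hadj1 : ∀ v ∈ (H₁ ∪ H₂)ᶜ, ∀ u ∈ H₁, G.Adj v u)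
    (hI : IsMaxIndepOn G (H₁ ∪ H₂) I) (hmeet : (I ∩ H₁).Nonempty) : IsMaxIndepSet G I := by
  obtain ⟨a, haI, haH₁⟩ := hmeet
  exact isMaxIndepSet_iff_isMaxIndepOn_univ.2
    (hI.extend (Set.subset_univ _) fun v _ hv => ⟨a, haI, (hadj1 v hv a haH₁).symm⟩)

theorem IsMaxIndepSet.isMaxIndepOn_compl_union_union_or
    (hadj1 : ∀ v ∈ (H₁ ∪ H₂)ᶜ, ∀ u ∈ H₁, G.Adj v u) (hI : IsMaxIndepSet G I) :
    IsMaxIndepOn G ((H₁ ∪ H₂)ᶜ ∪ H₂) I ∨ IsMaxIndepOn G (H₁ ∪ H₂) I ∧ (I ∩ H₁).Nonempty := by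
  rw [isMaxIndepSet_iff_isMaxIndepOn_univ] at hI
  by_cases hmeet : (I ∩ H₁).Nonempty
  · obtain ⟨a, haI, haH₁⟩ := hmeet
    refine Or.inr ⟨hI.restrict (fun v hvI => ?_) (Set.subset_univ _), a, haI, haH₁⟩
    by_contra hv
    exact hI.1.2 hvI haI (hadj1 v hv a haH₁)
  · refine Or.inl (hI.restrict (fun v hvI => ?_) (Set.subset_univ _))
    have hvH₁ : v ∉ H₁ := fun hvH₁ => hmeet ⟨v, hvI, hvH₁⟩
    simp only [Set.mem_union, Set.mem_compl_iff]
    tauto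

end

theorem stmt18_general [Fintype V] (G : SimpleGraph V) (H₁ H₂ : Set V)
    (hne : ((H₁ ∪ H₂)ᶜ : Set V).Nonempty)
    (hadj1 : ∀ v ∈ (H₁ ∪ H₂)ᶜ, ∀ u ∈ H₁, G.Adj v u)
    (hadj2 : ∀ v ∈ (H₁ ∪ H₂)ᶜ, ∀ u ∈ H₂, ¬ G.Adj v u) :
    WellCovered G ↔
      (WellCoveredOn G (H₁ ∪ H₂)ᶜ ∧ WellCoveredOn G H₂ ∧
        ∀ I : Set V, IsMaxIndepOn G (H₁ ∪ H₂) I → (I ∩ H₁).Nonempty →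
          I.ncard = indepNumOn G (H₁ ∪ H₂)ᶜ + indepNumOn G H₂) := by
  have hRH₂ : Disjoint (H₁ ∪ H₂)ᶜ H₂ :=
    (disjoint_compl_left (a := H₁ ∪ H₂)).mono_right Set.subset_union_right
  have of_sep : ∀ {I}, IsMaxIndepOn G ((H₁ ∪ H₂)ᶜ ∪ H₂) I → IsMaxIndepSet G I :=
    isMaxIndepSet_of_isMaxIndepOn_compl_union_union hne hadj1 hadj2
  constructor
  · intro hwc
    have hwcU : WellCoveredOn G ((H₁ ∪ H₂)ᶜ ∪ H₂) := fun I J hI hJ =>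
      hwc I J (of_sep hI) (of_sep hJ)
    have hwcR := hwcU.of_union_left hRH₂ hadj2
    have hwcH₂ := hwcU.of_union_right hRH₂ hadj2
    refine ⟨hwcR, hwcH₂, fun I hI hmeet => ?_⟩
    obtain ⟨J, hJ⟩ := exists_isMaxIndepOn G ((H₁ ∪ H₂)ᶜ ∪ H₂)
    rw [hwc I J (isMaxIndepSet_of_isMaxIndepOn_union hadj1 hI hmeet) (of_sep hJ)]
    exact ncard_eq_indepNumOn_add_of_isMaxIndepOn_union hRH₂ hadj2 hwcR hwcH₂ hJ
  · rintro ⟨hwcR, hwcH₂, hsize⟩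
    have hall : ∀ I, IsMaxIndepSet G I →
        I.ncard = indepNumOn G (H₁ ∪ H₂)ᶜ + indepNumOn G H₂ := fun I hI =>
      (hI.isMaxIndepOn_compl_union_union_or hadj1).elim
        (ncard_eq_indepNumOn_add_of_isMaxIndepOn_union hRH₂ hadj2 hwcR hwcH₂)
        fun ⟨hI', hmeet⟩ => hsize I hI' hmeet
    exact fun I J hI hJ => (hall I hI).trans (hall J hJ).symm

theorem stmt18 [Fintype V] (G : SimpleGraph V) (H₁ H₂ : Set V)
    (hdisj : Disjoint H₁ H₂) (hne : ((H₁ ∪ H₂)ᶜ : Set V).Nonempty)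
    (hadj1 : ∀ v ∈ (H₁ ∪ H₂)ᶜ, ∀ u ∈ H₁, G.Adj v u)
    (hadj2 : ∀ v ∈ (H₁ ∪ H₂)ᶜ, ∀ u ∈ H₂, ¬ G.Adj v u) :
    WellCovered G ↔
      (WellCoveredOn G (H₁ ∪ H₂)ᶜ ∧ WellCoveredOn G H₂ ∧
        ∀ I : Set V, IsMaxIndepOn G (H₁ ∪ H₂) I → (I ∩ H₁).Nonempty →
          I.ncard = indepNumOn G (H₁ ∪ H₂)ᶜ + indepNumOn G H₂) :=
  stmt18_general G H₁ H₂ hne hadj1 hadj2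
end
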